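/- Let G be a finite group having the elementary abelian group (ℤ_p)^m as a quotient group (i.e., there is a surjective group homomorphism from G onto (ℤ_p)^m), where p is prime and m ≥ 1, and let (A, B) be a near-factorization of G. If p is an odd prime, then |A|^{p−1} ≡ 1 (mod p^m) and |B|^{p−1} ≡ 1 (mod p^m). If p = 2, then either |A| ≡ 1 and |B| ≡ −1 (mod 2^m), or |A| ≡ −1 and |B| ≡ 1 (mod 2^m). -/

import Mathlib

/-!
Write `F : G → H` for the surjection onto the elementary abelian group `H`, and
`S_A(ψ) = ∑_{a ∈ A} ψ (F a)` for a character `ψ` of `H`. Since every element of `G \ {1}` is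
uniquely a product `a * b`, and a nontrivial character of `G` sums to zero,
`S_A(ψ) * S_B(ψ) = -1` for every `ψ ≠ 1`.

For odd `p`, the norm `N_A(ψ) = ∏_{t ∈ (ℤ/p)ˣ} S_A(ψ ^ t)` is an integer congruent to
`|A| ^ (p - 1)` modulo `p`, and `N_A(ψ) * N_B(ψ) = 1`; by Fermat, `N_A(ψ) = 1`. Summing `N_A` over
all characters counts, `|H|` times, the tuples `(a_t)` with `∑ t • F a_t = 0`, so
`|A| ^ (p - 1) + |H| - 1 ≡ 0` modulo `|H| = p ^ m`.

For `p = 2`, `S_A(ψ) = ±1` for `ψ ≠ 1`, so Parseval gives `|H| ∑_h K_h ^ 2 = |A| ^ 2 + |H| - 1`,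
where `K_h` is the number of `a ∈ A` with `F a = h`. As `∑ z ^ 2 ≥ |∑ z|` over the integers,
this forces `|A| ≡ ±1` modulo `|H|`, and `|A| * |B| = |G| - 1 ≡ -1` fixes the sign for `B`.
-/

open Finset
open scoped Pointwise

/-- A pair `(A, B)` of subsets of a finite group `G` is a near-factorization of `G`
if `|A| * |B| = |G| - 1` and `A * B = G \ {e}`. -/
def IsNearFactorization {G : Type*} [Group G] [Fintype G] [DecidableEq G]
    (A B : Finset G) : Prop :=
  A.card * B.card = Fintype.card G - 1 ∧ A * B = Finset.univ \ {1}

lemma AddChar.map_sum_eq_prod {A M κ : Type*} [AddCommMonoid A] [CommMonoid M] (ψ : AddChar A M)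
    (s : Finset κ) (x : κ → A) : ψ (∑ i ∈ s, x i) = ∏ i ∈ s, ψ (x i) := by
  induction s using Finset.cons_induction with
  | empty => simp
  | cons i s hi ih => rw [sum_cons, prod_cons, map_add_eq_mul, ih]

lemma Int.abs_sum_le_sum_sq {ι : Type*} (s : Finset ι) (z : ι → ℤ) :
    |∑ i ∈ s, z i| ≤ ∑ i ∈ s, z i ^ 2 :=
  (abs_sum_le_sum_abs _ _).trans <| sum_le_sum fun i _ ↦ by
    simpa using Int.natAbs_le_self_sq (z i)

/-- With `k := a / q` and `e := a % q`, the integers `z i = K i - k` satisfy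
`q * ∑ z i ^ 2 = e ^ 2 + q - 1` and `∑ z i ^ 2 ≥ |∑ z i| = e`, which leaves only
`e ∈ {0, 1, q - 1}`; and `e = 0` forces `q ∣ 1`. -/
lemma modEq_one_or_neg_one_of_card_mul_sum_sq {ι : Type*} [Fintype ι] (K : ι → ℤ)
    (h : Fintype.card ι * ∑ i, K i ^ 2 = (∑ i, K i) ^ 2 + Fintype.card ι - 1) :
    ∑ i, K i ≡ 1 [ZMOD Fintype.card ι] ∨ ∑ i, K i ≡ -1 [ZMOD Fintype.card ι] := by
  set q : ℤ := (Fintype.card ι : ℤ)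
  set a := ∑ i, K i
  have hq : 0 < q := by
    rcases isEmpty_or_nonempty ι with hι | hι
    · simp [q, a] at h
    · exact Int.natCast_pos.2 Fintype.card_pos
  set k := a / q
  set e := a % q
  have hae : a - q * k = e := (Int.emod_def a q).symm
  have hsq : q * ∑ i, (K i - k) ^ 2 = e ^ 2 + q - 1 := by
    simp only [sub_sq, sum_add_distrib, sum_sub_distrib, ← sum_mul, ← mul_sum, sum_const,
      card_univ, nsmul_eq_mul]
    rw [← hae]
    linear_combination h
  have hle : e ≤ ∑ i, (K i - k) ^ 2 := by
    have := Int.abs_sum_le_sum_sq univ fun i ↦ K i - k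
    rw [sum_sub_distrib, sum_const, card_univ, nsmul_eq_mul, hae] at this
    exact (le_abs_self _).trans this
  have he0 : 0 ≤ e := Int.emod_nonneg _ hq.ne'
  have heq : e < q := Int.emod_lt_of_pos _ hq
  have hqe : q * e ≤ e ^ 2 + q - 1 := hsq ▸ mul_le_mul_of_nonneg_left hle hq.le
  rcases lt_trichotomy e 1 with he | he | he
  · have hdvd : q ∣ 1 := ⟨1 - ∑ i, (K i - k) ^ 2, by rw [mul_sub, hsq, show e = 0 by omega]; ring⟩
    exact .inl (Int.modEq_iff_dvd.2 (hdvd.trans (one_dvd _)))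
  · exact .inl (Int.modEq_iff_dvd.2 ⟨-k, by linear_combination -hae - he⟩)
  · have he' : e = q - 1 := by nlinarith
    exact .inr (Int.modEq_iff_dvd.2 ⟨-k - 1, by linear_combination -hae - he'⟩)

lemma not_neg_one_modEq_pow_sub_one {p : ℕ} [Fact p.Prime] (hp2 : p ≠ 2) (a : ℤ) :
    ¬ -1 ≡ a ^ (p - 1) [ZMOD p] := by
  have hp := (Fact.out : p.Prime)
  have : Fact (2 < p) := ⟨lt_of_le_of_ne hp.two_le (Ne.symm hp2)⟩
  rw [← ZMod.intCast_eq_intCast_iff]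
  push_cast
  by_cases ha : (a : ZMod p) = 0
  · rw [ha, zero_pow (by have := hp.two_le; omega)]
    exact neg_ne_zero.2 one_ne_zero
  · rw [ZMod.pow_card_sub_one_eq_one ha]
    exact ZMod.neg_one_ne_one

section UnitsWeightedSum

variable {p : ℕ} [Fact p.Prime] {ι : Type*}

def unitsWeightedSum (c : ι → ZMod p) (u : (ZMod p)ˣ → ι) : ZMod p :=
  ∑ t : (ZMod p)ˣ, (t : ZMod p) * c (u t)

lemma unitsWeightedSum_comp_mul_right (c : ι → ZMod p) (u : (ZMod p)ˣ → ι) (r : (ZMod p)ˣ) :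
    unitsWeightedSum c (fun t ↦ u (t * r)) = (r⁻¹ : (ZMod p)ˣ) * unitsWeightedSum c u := by
  rw [unitsWeightedSum, unitsWeightedSum, mul_sum]
  refine Fintype.sum_equiv (Equiv.mulRight r) _ _ fun t ↦ ?_
  rw [Equiv.coe_mulRight, Units.val_mul]
  linear_combination (-(t * c (u (t * r)))) * Units.inv_mul r

variable (s : Finset ι) (c : ι → ZMod p)

lemma card_filter_unitsWeightedSum_inv_mul (r : (ZMod p)ˣ) (k : ZMod p) :
    #{u ∈ Fintype.piFinset fun _ ↦ s | unitsWeightedSum c u = (r⁻¹ : (ZMod p)ˣ) * k} =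
      #{u ∈ Fintype.piFinset fun _ ↦ s | unitsWeightedSum c u = k} := by
  refine card_nbij' (fun u t ↦ u (t * r⁻¹)) (fun u t ↦ u (t * r)) ?_ ?_ ?_ ?_
  all_goals intro u hu
  all_goals simp only [coe_filter, Set.mem_ofPred_eq, Fintype.mem_piFinset] at hu ⊢
  · refine ⟨fun t ↦ hu.1 _, ?_⟩
    rw [unitsWeightedSum_comp_mul_right, hu.2, inv_inv, Units.mul_inv_cancel_left]
  · exact ⟨fun t ↦ hu.1 _, by rw [unitsWeightedSum_comp_mul_right, hu.2]⟩
  all_goals simp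

lemma card_filter_unitsWeightedSum_eq_of_ne_zero {k : ZMod p} (hk : k ≠ 0) :
    #{u ∈ Fintype.piFinset fun _ ↦ s | unitsWeightedSum c u = k} =
      #{u ∈ Fintype.piFinset fun _ ↦ s | unitsWeightedSum c u = 1} := by
  simpa using card_filter_unitsWeightedSum_inv_mul s c (hk.isUnit.unit)⁻¹ 1

/-- Expanding the product gives `∑ k, K k * ψ k`, where `K k` counts the tuples whose
`unitsWeightedSum` is `k`. Precomposing tuples with a unit translation shows `K k = K 1` for
`k ≠ 0`, so the product is `K 0 - K 1 ≡ ∑ k, K k` modulo `p`. -/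
theorem exists_int_prod_units_sum_addChar_mul {R : Type*} [CommRing R] [IsDomain R]
    {ψ : AddChar (ZMod p) R} (hψ : ψ ≠ 1) :
    ∃ n : ℤ, ∏ t : (ZMod p)ˣ, ∑ i ∈ s, ψ (t * c i) = n ∧ n ≡ #s ^ (p - 1) [ZMOD p] := by
  set K : ZMod p → ℕ := fun k ↦ #{u ∈ Fintype.piFinset fun _ ↦ s | unitsWeightedSum c u = k}
  have hK : ∀ k ∈ ({0}ᶜ : Finset (ZMod p)), K k = K 1 := fun k hk ↦
    card_filter_unitsWeightedSum_eq_of_ne_zero s c (by simpa using hk)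
  have hprod : ∏ t : (ZMod p)ˣ, ∑ i ∈ s, ψ (t * c i) = ∑ k, (K k : R) * ψ k := by
    rw [prod_univ_sum, ← sum_fiberwise _ (unitsWeightedSum c)]
    refine sum_congr rfl fun k _ ↦ ?_
    rw [← nsmul_eq_mul, ← sum_const]
    refine sum_congr rfl fun u hu ↦ ?_
    rw [← (mem_filter.1 hu).2, unitsWeightedSum, AddChar.map_sum_eq_prod]
  have hψsum : ∑ k ∈ ({0}ᶜ : Finset (ZMod p)), ψ k = -1 := by
    have := Fintype.sum_eq_add_sum_compl 0 ψ
    rw [AddChar.sum_eq_zero_of_ne_one hψ, AddChar.map_zero_eq_one] at this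
    linear_combination -this
  have hcard : ∑ k, K k = #s ^ (p - 1) := by
    rw [← card_eq_sum_card_fiberwise fun _ _ ↦ mem_univ _, Fintype.card_piFinset, prod_const,
      card_univ, ZMod.card_units]
  have hcompl : #({0}ᶜ : Finset (ZMod p)) = p - 1 := by
    rw [card_compl, ZMod.card, card_singleton]
  refine ⟨K 0 - K 1, ?_, ?_⟩
  · rw [hprod, Fintype.sum_eq_add_sum_compl 0, sum_congr rfl fun k hk ↦ by rw [hK k hk],
      ← mul_sum, hψsum, AddChar.map_zero_eq_one]
    push_cast
    ring
  · rw [← Nat.cast_pow, ← hcard, Fintype.sum_eq_add_sum_compl 0, sum_congr rfl hK, sum_const,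
      hcompl, smul_eq_mul, Int.modEq_iff_dvd]
    refine ⟨K 1, ?_⟩
    have := (Fact.out : p.Prime).one_le
    push_cast [this]
    ring

theorem exists_int_prod_units_sum_pow_val {z : ι → ℂ} (hz : ∀ i, z i ^ p = 1) :
    ∃ n : ℤ, ∏ t : (ZMod p)ˣ, ∑ i ∈ s, z i ^ (t : ZMod p).val = n ∧
      n ≡ #s ^ (p - 1) [ZMOD p] := by
  have hζ := Complex.isPrimitiveRoot_exp p (NeZero.ne p)
  set ψ := AddChar.zmodChar p hζ.pow_eq_one
  have hψ : ψ ≠ 1 := by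
    rw [AddChar.zmod_char_ne_one_iff, ← Nat.cast_one, AddChar.zmodChar_apply', pow_one]
    exact hζ.ne_one (Fact.out : p.Prime).one_lt
  choose j hj using fun i ↦ (hζ.eq_pow_of_pow_eq_one (hz i)).imp fun _ ↦ And.right
  obtain ⟨n, hn, hmod⟩ := exists_int_prod_units_sum_addChar_mul s (fun i ↦ (j i : ZMod p)) hψ
  refine ⟨n, ?_, hmod⟩
  rw [← hn]
  refine prod_congr rfl fun t _ ↦ sum_congr rfl fun i _ ↦ ?_
  have : (t : ZMod p) * j i = ((t : ZMod p).val * j i : ℕ) := by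
    rw [Nat.cast_mul, ZMod.natCast_zmod_val]
  rw [this, AddChar.zmodChar_apply', pow_mul', hj]

end UnitsWeightedSum

section CharSum

variable {α H : Type*} [AddCommGroup H] (F : α → H)

def charSum (A : Finset α) (ψ : AddChar H ℂ) : ℂ := ∑ a ∈ A, ψ (F a)

/-- When `p • H = 0`, this is the norm of `charSum F A ψ` from `ℚ(ζ_p)` to `ℚ`: the Galois
conjugates of `ψ` are its powers `ψ ^ t` with `t` prime to `p`. -/
def charNorm (p : ℕ) [NeZero p] (A : Finset α) (ψ : AddChar H ℂ) : ℂ :=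
  ∏ t : (ZMod p)ˣ, charSum F A (ψ ^ (t : ZMod p).val)

variable {F} {p : ℕ} [Fact p.Prime] {A B : Finset α}

@[simp] lemma charSum_one (A : Finset α) : charSum F A 1 = #A := by simp [charSum]

@[simp] lemma charNorm_one (A : Finset α) : charNorm F p A 1 = #A ^ (p - 1) := by
  simp [charNorm, Nat.totient_prime Fact.out]

lemma charNorm_two (A : Finset α) (ψ : AddChar H ℂ) : charNorm F 2 A ψ = charSum F A ψ := by
  rw [charNorm, Fintype.prod_subsingleton _ 1, Units.val_one, ZMod.val_one, pow_one]

lemma exists_charNorm_eq_intCast (hH : ∀ x : H, p • x = 0) (A : Finset α) (ψ : AddChar H ℂ) :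
    ∃ n : ℤ, charNorm F p A ψ = n ∧ n ≡ #A ^ (p - 1) [ZMOD p] := by
  simp only [charNorm, charSum, AddChar.pow_apply]
  exact exists_int_prod_units_sum_pow_val A fun a ↦ by
    rw [← AddChar.map_nsmul_eq_pow, hH, AddChar.map_zero_eq_one]

lemma AddChar.pow_val_ne_one (hH : ∀ x : H, p • x = 0) {ψ : AddChar H ℂ} (hψ : ψ ≠ 1)
    (t : (ZMod p)ˣ) : ψ ^ (t : ZMod p).val ≠ 1 := by
  have hψp : ψ ^ p = 1 := by
    ext x
    rw [AddChar.pow_apply, ← AddChar.map_nsmul_eq_pow, hH, AddChar.map_zero_eq_one,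
      AddChar.one_apply]
  intro h
  rw [← orderOf_dvd_iff_pow_eq_one, orderOf_eq_prime hψp hψ] at h
  exact t.ne_zero ((ZMod.val_eq_zero _).1 (Nat.eq_zero_of_dvd_of_lt h (ZMod.val_lt _)))

lemma charNorm_mul_charNorm (hH : ∀ x : H, p • x = 0)
    (hAB : ∀ ψ ≠ 1, charSum F A ψ * charSum F B ψ = -1) {ψ : AddChar H ℂ} (hψ : ψ ≠ 1) :
    charNorm F p A ψ * charNorm F p B ψ = (-1) ^ (p - 1) := by
  rw [charNorm, charNorm, ← prod_mul_distrib,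
    prod_congr rfl fun t _ ↦ hAB _ (AddChar.pow_val_ne_one hH hψ t), prod_const, card_univ,
    ZMod.card_units]

lemma charSum_sq_eq_one (hH : ∀ x : H, 2 • x = 0)
    (hAB : ∀ ψ ≠ 1, charSum F A ψ * charSum F B ψ = -1) {ψ : AddChar H ℂ} (hψ : ψ ≠ 1) :
    charSum F A ψ ^ 2 = 1 := by
  obtain ⟨nA, hA, -⟩ := exists_charNorm_eq_intCast hH A ψ
  obtain ⟨nB, hB, -⟩ := exists_charNorm_eq_intCast hH B ψ
  rw [charNorm_two] at hA hB
  have hAB' := hAB ψ hψ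
  rw [hA, hB] at hAB'
  rw [hA]
  rcases Int.eq_one_or_neg_one_of_mul_eq_neg_one (by exact_mod_cast hAB') with h | h <;>
    simp [h]

variable [Fintype H]

lemma sum_addChar_eq_add_of_ne_one {X : AddChar H ℂ → ℂ} (hX : ∀ ψ ≠ 1, X ψ = 1) :
    ∑ ψ, X ψ = X 1 + (Fintype.card H - 1) := by
  rw [Fintype.sum_eq_add_sum_compl 1, sum_congr rfl fun ψ hψ ↦ hX ψ (by simpa using hψ),
    sum_const, card_compl, AddChar.card_eq, card_singleton, nsmul_one,
    Nat.cast_sub Fintype.card_pos, Nat.cast_one]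

variable [DecidableEq H]

lemma sum_charNorm (A : Finset α) :
    ∑ ψ, charNorm F p A ψ = Fintype.card H *
      #{u ∈ Fintype.piFinset fun _ ↦ A | ∑ t : (ZMod p)ˣ, (t : ZMod p).val • F (u t) = 0} := by
  simp only [charNorm, charSum, AddChar.pow_apply, prod_univ_sum]
  rw [sum_comm, card_filter, Nat.cast_sum, mul_sum]
  refine sum_congr rfl fun u _ ↦ ?_
  simp_rw [← AddChar.map_nsmul_eq_pow, ← AddChar.map_sum_eq_prod, AddChar.sum_apply_eq_ite]
  split_ifs <;> simp

theorem pow_sub_one_modEq_one_of_charSum_mul (hp2 : p ≠ 2) (hH : ∀ x : H, p • x = 0)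
    (hAB : ∀ ψ ≠ 1, charSum F A ψ * charSum F B ψ = -1) :
    (#A : ℤ) ^ (p - 1) ≡ 1 [ZMOD Fintype.card H] := by
  have hnorm : ∀ ψ ≠ 1, charNorm F p A ψ = 1 := by
    intro ψ hψ
    obtain ⟨nA, hA, hAmod⟩ := exists_charNorm_eq_intCast hH A ψ
    obtain ⟨nB, hB, -⟩ := exists_charNorm_eq_intCast hH B ψ
    have hunit : IsUnit (nA * nB) := by
      have := charNorm_mul_charNorm hH hAB hψ
      rw [hA, hB] at this
      rw [show nA * nB = (-1) ^ (p - 1) by exact_mod_cast this]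
      exact isUnit_neg_one.pow _
    rcases Int.isUnit_iff.1 (isUnit_of_mul_isUnit_left hunit) with h | h
    · rw [hA, h, Int.cast_one]
    · exact absurd (h ▸ hAmod) (not_neg_one_modEq_pow_sub_one hp2 _)
  have hsum := sum_charNorm (F := F) (p := p) A
  rw [sum_addChar_eq_add_of_ne_one hnorm, charNorm_one] at hsum
  set C := #{u ∈ Fintype.piFinset fun _ ↦ A | ∑ t : (ZMod p)ˣ, (t : ZMod p).val • F (u t) = 0}
  refine (Int.modEq_iff_dvd.2 ⟨C - 1, ?_⟩).symm
  exact_mod_cast (by linear_combination hsum :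
    ((#A : ℂ) ^ (p - 1) - 1 = Fintype.card H * ((C : ℂ) - 1)))

lemma sum_addChar_sum_mul_sq (hH : ∀ x : H, 2 • x = 0) (g : H → ℂ) :
    ∑ ψ : AddChar H ℂ, (∑ h, g h * ψ h) ^ 2 = Fintype.card H * ∑ h, g h ^ 2 := by
  have hneg : ∀ h h' : H, h + h' = 0 ↔ h' = h := fun h h' ↦ by
    rw [add_eq_zero_iff_eq_neg', neg_eq_of_add_eq_zero_right (two_nsmul h ▸ hH h)]
  calc ∑ ψ : AddChar H ℂ, (∑ h, g h * ψ h) ^ 2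
      = ∑ h, ∑ h', g h * g h' * ∑ ψ : AddChar H ℂ, ψ (h + h') := by
        simp_rw [sq, sum_mul_sum, mul_sum, AddChar.map_add_eq_mul]
        rw [sum_comm]
        refine sum_congr rfl fun h _ ↦ ?_
        rw [sum_comm]
        refine sum_congr rfl fun h' _ ↦ sum_congr rfl fun ψ _ ↦ ?_
        ring
    _ = Fintype.card H * ∑ h, g h ^ 2 := by
        simp_rw [AddChar.sum_apply_eq_ite, hneg, mul_ite, mul_zero, sum_ite_eq', mem_univ,
          if_true, mul_sum]
        exact sum_congr rfl fun h _ ↦ by ring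

lemma charSum_eq_sum_card_filter_mul (A : Finset α) (ψ : AddChar H ℂ) :
    charSum F A ψ = ∑ h, (#{a ∈ A | F a = h} : ℂ) * ψ h := by
  rw [charSum, ← sum_fiberwise A F]
  refine sum_congr rfl fun h _ ↦ ?_
  rw [sum_congr rfl fun a ha ↦ by rw [(mem_filter.1 ha).2], sum_const, nsmul_eq_mul]

theorem card_modEq_one_or_neg_one_of_charSum_mul (hH : ∀ x : H, 2 • x = 0)
    (hAB : ∀ ψ ≠ 1, charSum F A ψ * charSum F B ψ = -1) :
    (#A : ℤ) ≡ 1 [ZMOD Fintype.card H] ∨ (#A : ℤ) ≡ -1 [ZMOD Fintype.card H] := by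
  have hcard : ∑ h, (#{a ∈ A | F a = h} : ℤ) = #A := by
    exact_mod_cast (card_eq_sum_card_fiberwise fun _ _ ↦ mem_univ _).symm
  have hparseval := sum_addChar_sum_mul_sq hH fun h ↦ (#{a ∈ A | F a = h} : ℂ)
  simp_rw [← charSum_eq_sum_card_filter_mul] at hparseval
  rw [sum_addChar_eq_add_of_ne_one fun ψ hψ ↦ charSum_sq_eq_one hH hAB hψ, charSum_one] at hparseval
  rw [← hcard]
  refine modEq_one_or_neg_one_of_card_mul_sum_sq _ ?_
  rw [hcard]
  exact_mod_cast (by linear_combination -hparseval :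
    (Fintype.card H : ℂ) * ∑ h, (#{a ∈ A | F a = h} : ℂ) ^ 2 = #A ^ 2 + Fintype.card H - 1)

end CharSum

section NearFactorization

variable {G H : Type*} [Group G] [Fintype G] [AddCommGroup H]

lemma sum_addChar_comp_eq_zero {f : G →* Multiplicative H} (hf : Function.Surjective f)
    {ψ : AddChar H ℂ} (hψ : ψ ≠ 1) : ∑ g, ψ (f g).toAdd = 0 := by
  refine sum_hom_units_eq_zero (ψ.toMonoidHom.comp f) fun h ↦ ?_
  obtain ⟨x, hx⟩ := AddChar.ne_one_iff.1 hψ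
  obtain ⟨g, hg⟩ := hf (.ofAdd x)
  exact hx (by simpa [hg] using DFunLike.congr_fun h g)

variable [DecidableEq G] {A B : Finset G}

lemma IsNearFactorization.sum_sum_mul (h : IsNearFactorization A B) {M : Type*}
    [AddCommMonoid M] (φ : G → M) :
    ∑ a ∈ A, ∑ b ∈ B, φ (a * b) = ∑ g ∈ univ \ {1}, φ g := by
  have hinj : Set.InjOn (fun x : G × G ↦ x.1 * x.2) (A ×ˢ B : Set (G × G)) := by
    rw [← card_mul_iff, h.2, card_sdiff_of_subset (subset_univ _), card_univ, card_singleton, h.1]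
  rw [← h.2, mul_def, sum_image (by simpa using hinj), sum_product]

lemma IsNearFactorization.card_mul_card_modEq_neg_one (h : IsNearFactorization A B) {d : ℕ}
    (hd : d ∣ Fintype.card G) : (#A : ℤ) * #B ≡ -1 [ZMOD d] := by
  obtain ⟨c, hc⟩ := hd
  have hAB : ((#A * #B : ℕ) : ℤ) = Fintype.card G - 1 := by
    rw [h.1, Nat.cast_sub Fintype.card_pos, Nat.cast_one]
  refine (Int.modEq_iff_dvd.2 ⟨c, ?_⟩).symm
  rw [← Nat.cast_mul, hAB, hc]
  push_cast
  ring

lemma IsNearFactorization.charSum_mul_charSum (h : IsNearFactorization A B)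
    {f : G →* Multiplicative H} (hf : Function.Surjective f) {ψ : AddChar H ℂ} (hψ : ψ ≠ 1) :
    charSum (Multiplicative.toAdd ∘ f) A ψ * charSum (Multiplicative.toAdd ∘ f) B ψ = -1 := by
  simp_rw [charSum, sum_mul_sum, Function.comp_apply, ← AddChar.map_add_eq_mul, ← toAdd_mul,
    ← map_mul]
  rw [h.sum_sum_mul fun g ↦ ψ (f g).toAdd, sum_sdiff_eq_sub (subset_univ _),
    sum_addChar_comp_eq_zero hf hψ, sum_singleton, map_one, toAdd_one, AddChar.map_zero_eq_one,
    zero_sub]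

end NearFactorization

theorem near_factorization_elementary_abelian_quotient_general
    {G : Type*} [Group G] [Fintype G] [DecidableEq G]
    (p m : ℕ) (hp : p.Prime)
    (f : G →* Multiplicative (Fin m → ZMod p)) (hf : Function.Surjective f)
    (A B : Finset G) (h : IsNearFactorization A B) :
    (Odd p →
        (A.card : ℤ) ^ (p - 1) ≡ 1 [ZMOD (p : ℤ) ^ m] ∧
        (B.card : ℤ) ^ (p - 1) ≡ 1 [ZMOD (p : ℤ) ^ m]) ∧
    (p = 2 →
        ((A.card : ℤ) ≡ 1 [ZMOD (2 : ℤ) ^ m] ∧ (B.card : ℤ) ≡ -1 [ZMOD (2 : ℤ) ^ m]) ∨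
        ((A.card : ℤ) ≡ -1 [ZMOD (2 : ℤ) ^ m] ∧ (B.card : ℤ) ≡ 1 [ZMOD (2 : ℤ) ^ m])) := by
  have := Fact.mk hp
  have hAB (ψ : AddChar (Fin m → ZMod p) ℂ) (hψ : ψ ≠ 1) := h.charSum_mul_charSum hf hψ
  have hH (x : Fin m → ZMod p) : p • x = 0 := by ext; simp
  have hcard : (Fintype.card (Fin m → ZMod p) : ℤ) = p ^ m := by simp
  refine ⟨fun hodd ↦ ?_, fun hp2 ↦ ?_⟩
  · have hp2 : p ≠ 2 := by rintro rfl; exact Nat.not_odd_iff_even.2 even_two hodd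
    rw [← hcard]
    exact ⟨pow_sub_one_modEq_one_of_charSum_mul hp2 hH hAB,
      pow_sub_one_modEq_one_of_charSum_mul hp2 hH fun ψ hψ ↦ mul_comm (charSum _ A ψ) _ ▸ hAB ψ hψ⟩
  subst hp2
  have hABcard := h.card_mul_card_modEq_neg_one (d := 2 ^ m) <| by
    simpa using Subgroup.card_dvd_of_surjective f hf
  rcases hcard ▸ card_modEq_one_or_neg_one_of_charSum_mul hH hAB with hA | hA
  · exact .inl ⟨hA, by simpa using ((hA.mul_right _).symm.trans hABcard)⟩
  · exact .inr ⟨hA, by simpa using ((hA.mul_right _).symm.trans hABcard).neg⟩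

theorem near_factorization_elementary_abelian_quotient
    {G : Type*} [Group G] [Fintype G] [DecidableEq G]
    (p m : ℕ) (hp : p.Prime) (hm : 1 ≤ m)
    (f : G →* Multiplicative (Fin m → ZMod p)) (hf : Function.Surjective f)
    (A B : Finset G) (h : IsNearFactorization A B) :
    (Odd p →
        (A.card : ℤ) ^ (p - 1) ≡ 1 [ZMOD (p : ℤ) ^ m] ∧
        (B.card : ℤ) ^ (p - 1) ≡ 1 [ZMOD (p : ℤ) ^ m]) ∧
    (p = 2 →
        ((A.card : ℤ) ≡ 1 [ZMOD (2 : ℤ) ^ m] ∧ (B.card : ℤ) ≡ -1 [ZMOD (2 : ℤ) ^ m]) ∨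
        ((A.card : ℤ) ≡ -1 [ZMOD (2 : ℤ) ^ m] ∧ (B.card : ℤ) ≡ 1 [ZMOD (2 : ℤ) ^ m])) :=
  near_factorization_elementary_abelian_quotient_general p m hp f hf A B h
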